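/- Let X be a finite nonempty set and let N be a rooted binary phylogenetic network on X that is level-1. Then N has at most |X| - 1 reticulations. -/

import Mathlib

namespace Phylo

/-- A rooted directed multigraph (edges as a multiset of ordered pairs) with a
designated root, with vertices drawn from `ℕ`. -/
structure RootedNet where
  verts : Finset ℕ
  edges : Multiset (ℕ × ℕ)
  root : ℕ

namespace RootedNet

/-- In-degree of a vertex. -/
def inDeg (N : RootedNet) (v : ℕ) : ℕ := (N.edges.filter (fun e => e.2 = v)).card

/-- Out-degree of a vertex. -/
def outDeg (N : RootedNet) (v : ℕ) : ℕ := (N.edges.filter (fun e => e.1 = v)).card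

/-- A reticulation of a rooted network: a vertex of in-degree two. -/
def IsRet (N : RootedNet) (v : ℕ) : Prop := v ∈ N.verts ∧ N.inDeg v = 2

/-- A tree vertex of a rooted network: in-degree one and out-degree two. -/
def IsTreeVert (N : RootedNet) (v : ℕ) : Prop :=
  v ∈ N.verts ∧ N.inDeg v = 1 ∧ N.outDeg v = 2

/-- The number of reticulations. -/
def numRet (N : RootedNet) : ℕ := (N.verts.filter (fun v => N.inDeg v = 2)).card

/-- The number of tree vertices. -/
def numTreeVert (N : RootedNet) : ℕ :=
  (N.verts.filter (fun v => N.inDeg v = 1 ∧ N.outDeg v = 2)).card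

/-- `N` is a rooted binary phylogenetic network on leaf set `X`:
a rooted acyclic digraph without loops in which the root has in-degree 0 and
out-degree 1, the out-degree-0 vertices are exactly `X` and have in-degree 1,
and every other non-root vertex is a tree vertex or a reticulation. -/
def IsPhylo (X : Finset ℕ) (N : RootedNet) : Prop :=
  X.Nonempty ∧ X ⊆ N.verts ∧
  (∀ e ∈ N.edges, e.1 ∈ N.verts ∧ e.2 ∈ N.verts) ∧
  (∀ v : ℕ, ¬ Relation.TransGen (fun a b => (a, b) ∈ N.edges) v v) ∧
  N.root ∈ N.verts ∧ N.inDeg N.root = 0 ∧ N.outDeg N.root = 1 ∧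
  (∀ v ∈ N.verts, (v ∈ X ↔ N.outDeg v = 0)) ∧
  (∀ v ∈ N.verts, N.outDeg v = 0 → N.inDeg v = 1) ∧
  (∀ v ∈ N.verts, v ≠ N.root → N.outDeg v ≠ 0 →
    (N.inDeg v = 1 ∧ N.outDeg v = 2) ∨ (N.inDeg v = 2 ∧ N.outDeg v = 1))

/-- The underlying undirected edge multiset of a rooted network. -/
def underlying (N : RootedNet) : Multiset (Sym2 ℕ) :=
  N.edges.map (fun e => s(e.1, e.2))

end RootedNet

/-- The multiset of (undirected) edges traversed by the closed walk through the
vertices of the list `c` (in cyclic order). -/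
def cycleEdges (c : List ℕ) : Multiset (Sym2 ℕ) :=
  ↑(List.zipWith (fun a b => s(a, b)) c (c.rotate 1))

/-- The list `c` of distinct vertices is a cycle in the undirected multigraph
with edge multiset `E` (with multiplicities: a cycle of length 2 needs a pair of
parallel edges; a cycle of length 1 is a loop). -/
def IsCycleIn (E : Multiset (Sym2 ℕ)) (c : List ℕ) : Prop :=
  c ≠ [] ∧ c.Nodup ∧ cycleEdges c ≤ E

/-- Level-1: each cycle has length at least three and no two (distinct) cycles
share a vertex. -/
def Level1 (E : Multiset (Sym2 ℕ)) : Prop :=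
  (∀ c : List ℕ, IsCycleIn E c → 3 ≤ c.length) ∧
  (∀ c₁ c₂ : List ℕ, IsCycleIn E c₁ → IsCycleIn E c₂ →
    cycleEdges c₁ ≠ cycleEdges c₂ → ∀ v, v ∈ c₁ → v ∉ c₂)

/-- Almost level-1: at most one cycle of length two, all other cycles have
length at least three, and no two (distinct) cycles share a vertex. -/
def AlmostLevel1 (E : Multiset (Sym2 ℕ)) : Prop :=
  (∀ c : List ℕ, IsCycleIn E c → 2 ≤ c.length) ∧
  (∀ c₁ c₂ : List ℕ, IsCycleIn E c₁ → IsCycleIn E c₂ → c₁.length = 2 →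
    c₂.length = 2 → cycleEdges c₁ = cycleEdges c₂) ∧
  (∀ c₁ c₂ : List ℕ, IsCycleIn E c₁ → IsCycleIn E c₂ →
    cycleEdges c₁ ≠ cycleEdges c₂ → ∀ v, v ∈ c₁ → v ∉ c₂)

/-- Reachability in the undirected multigraph with edge multiset `E`. -/
def Reaches (E : Multiset (Sym2 ℕ)) (u v : ℕ) : Prop :=
  Relation.ReflTransGen (fun a b => s(a, b) ∈ E) u v

/-- The graph on vertex set `V` with undirected edge multiset `E` has exactly
two connected components. -/
def TwoComponents (V : Finset ℕ) (E : Multiset (Sym2 ℕ)) : Prop :=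
  ∃ A B : Finset ℕ, A.Nonempty ∧ B.Nonempty ∧ A ∪ B = V ∧ Disjoint A B ∧
    (∀ u ∈ A, ∀ v ∈ A, Reaches E u v) ∧
    (∀ u ∈ B, ∀ v ∈ B, Reaches E u v) ∧
    (∀ u ∈ A, ∀ v ∈ B, ¬ Reaches E u v)

/-- `e` is a cut edge: deleting (one copy of) it leaves exactly two connected
components. -/
def IsCutEdgeU (V : Finset ℕ) (E : Multiset (Sym2 ℕ)) (e : Sym2 ℕ) : Prop :=
  e ∈ E ∧ TwoComponents V (E.erase e)

/-- A cut edge of a rooted network. -/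
def RootedNet.IsCutEdge (N : RootedNet) (e : ℕ × ℕ) : Prop :=
  e ∈ N.edges ∧ TwoComponents N.verts (N.underlying.erase s(e.1, e.2))

/-- Isomorphism of rooted networks fixing each leaf in `X`. -/
def RootedNet.Iso (X : Finset ℕ) (N N' : RootedNet) : Prop :=
  ∃ ψ : ℕ → ℕ, Set.BijOn ψ (N.verts : Set ℕ) (N'.verts : Set ℕ) ∧
    (∀ x ∈ X, ψ x = x) ∧
    N'.edges = N.edges.map (fun e => (ψ e.1, ψ e.2))

/-- Cut edge transfer (CET) on rooted binary phylogenetic networks on `X`: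
delete the cut edge `(u,v)` (not incident with the root, `u` not a
reticulation), suppress `u`, subdivide an edge `(a,b)` of the root component
with a fresh vertex `u'` and add the edge `(u',v)`; the result must not be
isomorphic to the original network. -/
def RootedNet.CET (X : Finset ℕ) (N N' : RootedNet) : Prop :=
  N.IsPhylo X ∧ N'.IsPhylo X ∧ ¬ RootedNet.Iso X N N' ∧
  ∃ u v p c a b u' : ℕ, ∃ M : RootedNet,
    N.IsCutEdge (u, v) ∧ u ≠ N.root ∧ v ≠ N.root ∧ ¬ N.IsRet u ∧
    N.edges.filter (fun e => e.2 = u) = {(p, u)} ∧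
    N.edges.filter (fun e => e.1 = u) = {(u, v), (u, c)} ∧
    M.verts = N.verts.erase u ∧
    M.edges = (p, c) ::ₘ (((N.edges.erase (u, v)).erase (p, u)).erase (u, c)) ∧
    M.root = N.root ∧
    (a, b) ∈ M.edges ∧ Reaches M.underlying N.root a ∧
    u' ∉ M.verts ∧
    N'.verts = insert u' M.verts ∧
    N'.edges = (a, u') ::ₘ (u', b) ::ₘ (u', v) ::ₘ (M.edges.erase (a, b)) ∧
    N'.root = N.root

/-- A mixed multigraph: directed (reticulation) edges and undirected edges. -/
structure MixedNet where
  verts : Finset ℕ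
  dedges : Multiset (ℕ × ℕ)
  uedges : Multiset (Sym2 ℕ)

namespace MixedNet

/-- The underlying undirected edge multiset of a mixed network. -/
def underlying (N : MixedNet) : Multiset (Sym2 ℕ) :=
  N.uedges + N.dedges.map (fun e => s(e.1, e.2))

/-- Directed in-degree. -/
def dInDeg (N : MixedNet) (v : ℕ) : ℕ := (N.dedges.filter (fun e => e.2 = v)).card

/-- A reticulation of a semi-directed network: two edges directed into `v`, or
a loop at `v`. -/
def IsRet (N : MixedNet) (v : ℕ) : Prop :=
  v ∈ N.verts ∧ (N.dInDeg v = 2 ∨ (v, v) ∈ N.dedges)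

/-- The number of reticulations of a semi-directed network. -/
def numRet (N : MixedNet) : ℕ :=
  (N.verts.filter (fun v => N.dInDeg v = 2 ∨ (v, v) ∈ N.dedges)).card

/-- Isomorphism of mixed networks fixing each leaf in `X`. -/
def Iso (X : Finset ℕ) (N N' : MixedNet) : Prop :=
  ∃ ψ : ℕ → ℕ, Set.BijOn ψ (N.verts : Set ℕ) (N'.verts : Set ℕ) ∧
    (∀ x ∈ X, ψ x = x) ∧
    N'.dedges = N.dedges.map (fun e => (ψ e.1, ψ e.2)) ∧
    N'.uedges = N.uedges.map (Sym2.map ψ)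

end MixedNet

/-- Edges of `Nr` surviving the passage to the semi-directed network:
those not incident with the root or with the child `t` of the root. -/
def semiKeep (Nr : RootedNet) (t : ℕ) : Multiset (ℕ × ℕ) :=
  Nr.edges.filter (fun e => ¬(e.1 = Nr.root) ∧ ¬(e.1 = t) ∧ ¬(e.2 = t))

/-- Surviving edges that stay directed (those into a reticulation). -/
def semiKeepD (Nr : RootedNet) (t : ℕ) : Multiset (ℕ × ℕ) :=
  (semiKeep Nr t).filter (fun e => Nr.inDeg e.2 = 2)

/-- Surviving edges that become undirected (tree edges). -/
def semiKeepU (Nr : RootedNet) (t : ℕ) : Multiset (Sym2 ℕ) :=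
  ((semiKeep Nr t).filter (fun e => ¬ Nr.inDeg e.2 = 2)).map (fun e => s(e.1, e.2))

/-- `Ns` is the mixed graph obtained from the rooted network `Nr` by deleting
the root, suppressing the resulting in-degree-0 out-degree-2 vertex `t`, and
undirecting all tree edges. If the two out-edges of `t` are parallel, a
directed loop is created; the edge created by suppressing `t` is directed
towards a reticulation endpoint, and undirected otherwise. -/
def SemiDirectedFrom (Nr : RootedNet) (Ns : MixedNet) : Prop :=
  ∃ t w₁ w₂ : ℕ,
    (Nr.root, t) ∈ Nr.edges ∧
    Nr.edges.filter (fun e => e.1 = t) = {(t, w₁), (t, w₂)} ∧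
    Ns.verts = (Nr.verts.erase Nr.root).erase t ∧
    ((w₁ = w₂ ∧ Ns.dedges = (w₁, w₁) ::ₘ semiKeepD Nr t ∧
        Ns.uedges = semiKeepU Nr t) ∨
     (w₁ ≠ w₂ ∧ Nr.inDeg w₁ = 2 ∧ Ns.dedges = (w₂, w₁) ::ₘ semiKeepD Nr t ∧
        Ns.uedges = semiKeepU Nr t) ∨
     (w₁ ≠ w₂ ∧ ¬ Nr.inDeg w₁ = 2 ∧ Nr.inDeg w₂ = 2 ∧
        Ns.dedges = (w₁, w₂) ::ₘ semiKeepD Nr t ∧ Ns.uedges = semiKeepU Nr t) ∨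
     (¬ Nr.inDeg w₁ = 2 ∧ ¬ Nr.inDeg w₂ = 2 ∧ Ns.dedges = semiKeepD Nr t ∧
        Ns.uedges = s(w₁, w₂) ::ₘ semiKeepU Nr t))

/-- `Nr` is a rooted partner of the semi-directed network `Ns` on `X`. -/
def IsRootedPartner (X : Finset ℕ) (Nr : RootedNet) (Ns : MixedNet) : Prop :=
  Nr.IsPhylo X ∧ SemiDirectedFrom Nr Ns

/-- `Ns` is a semi-directed binary phylogenetic network on `X`. -/
def IsSemiDirected (X : Finset ℕ) (Ns : MixedNet) : Prop :=
  ∃ Nr : RootedNet, IsRootedPartner X Nr Ns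

/-- `Ns` is a semi-directed level-1 network on `X`: it has a level-1 rooted
partner. -/
def IsSemiLevel1 (X : Finset ℕ) (Ns : MixedNet) : Prop :=
  ∃ Nr : RootedNet, IsRootedPartner X Nr Ns ∧ Level1 Nr.underlying

/-- `Ns` is a semi-directed almost level-1 network on `X`: it has an almost
level-1 rooted partner. -/
def IsSemiAlmostLevel1 (X : Finset ℕ) (Ns : MixedNet) : Prop :=
  ∃ Nr : RootedNet, IsRootedPartner X Nr Ns ∧ AlmostLevel1 Nr.underlying

/-- Delete the undirected edge `{u,v}` from `N`, giving `M`. -/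
def DeleteUEdge (N : MixedNet) (u v : ℕ) (M : MixedNet) : Prop :=
  M.verts = N.verts ∧ N.uedges = s(u, v) ::ₘ M.uedges ∧ M.dedges = N.dedges

/-- Suppress the degree-two vertex `w` of `N` whose two incident edges lead to
`a` and `b`, giving `M`. The merged edge is directed into a reticulation
endpoint (in particular two parallel directed donor edges merge to a loop when
`a = b`) and undirected otherwise. -/
def SuppressVertexAt (N : MixedNet) (w a b : ℕ) (M : MixedNet) : Prop :=
  M.verts = N.verts.erase w ∧
  (∀ g ∈ M.uedges, ¬ w ∈ g) ∧ (∀ g ∈ M.dedges, g.1 ≠ w ∧ g.2 ≠ w) ∧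
  ((∃ U₀, N.uedges = s(w, a) ::ₘ s(w, b) ::ₘ U₀ ∧ M.uedges = s(a, b) ::ₘ U₀ ∧
      M.dedges = N.dedges) ∨
   (∃ U₀ D₀, N.uedges = s(w, a) ::ₘ U₀ ∧ N.dedges = (w, b) ::ₘ D₀ ∧
      M.uedges = U₀ ∧ M.dedges = (a, b) ::ₘ D₀) ∨
   (∃ U₀ D₀, N.uedges = U₀ ∧ N.dedges = (w, a) ::ₘ (w, b) ::ₘ D₀ ∧
      M.uedges = U₀ ∧ (M.dedges = (a, b) ::ₘ D₀ ∨ M.dedges = (b, a) ::ₘ D₀)))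

/-- Subdivide the recipient edge (with underlying edge `f`, lying in the
connected component of `M` not containing `v`) with a fresh vertex `u'` and add
the new cut edge `{u',v}`, giving `N'`. Subdividing a loop `(w,w)` produces two
parallel edges directed into `w`. -/
def SubdivideAttach (M : MixedNet) (u' v : ℕ) (f : Sym2 ℕ) (N' : MixedNet) : Prop :=
  u' ∉ M.verts ∧ N'.verts = insert u' M.verts ∧
  (∃ a, a ∈ f ∧ ¬ Reaches M.underlying v a) ∧
  ((∃ a b U₀, f = s(a, b) ∧ M.uedges = s(a, b) ::ₘ U₀ ∧
      N'.uedges = s(a, u') ::ₘ s(u', b) ::ₘ s(u', v) ::ₘ U₀ ∧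
      N'.dedges = M.dedges) ∨
   (∃ a b D₀, f = s(a, b) ∧ a ≠ b ∧ M.dedges = (a, b) ::ₘ D₀ ∧
      N'.dedges = (u', b) ::ₘ D₀ ∧
      N'.uedges = s(a, u') ::ₘ s(u', v) ::ₘ M.uedges) ∨
   (∃ w D₀, f = s(w, w) ∧ M.dedges = (w, w) ::ₘ D₀ ∧
      N'.dedges = (u', w) ::ₘ (u', w) ::ₘ D₀ ∧
      N'.uedges = s(u', v) ::ₘ M.uedges))

/-- Witness data for a cut edge transfer (CET) on semi-directed networks on
`X`, recording the deleted cut edge `{u,v}`, the other endpoints `w₁, w₂` of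
the two donor edges at `u`, the fresh vertex `u'` and the (underlying edge of
the) recipient edge `f`. -/
def MixedNet.CETWitness (X : Finset ℕ) (N N' : MixedNet)
    (u v w₁ w₂ u' : ℕ) (f : Sym2 ℕ) : Prop :=
  IsSemiDirected X N ∧ IsSemiDirected X N' ∧ ¬ MixedNet.Iso X N N' ∧
  s(u, v) ∈ N.uedges ∧ IsCutEdgeU N.verts N.underlying s(u, v) ∧
  ¬ N.IsRet u ∧
  (∃ Nr : RootedNet, IsRootedPartner X Nr N ∧
    ((u, v) ∈ Nr.edges ∨
      ∃ t : ℕ, Nr.IsCutEdge (Nr.root, t) ∧ Nr.IsCutEdge (t, u) ∧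
        Nr.IsCutEdge (t, v))) ∧
  ∃ M₀ M : MixedNet, DeleteUEdge N u v M₀ ∧ SuppressVertexAt M₀ u w₁ w₂ M ∧
    SubdivideAttach M u' v f N'

/-- Cut edge transfer (CET) on semi-directed networks on `X`. -/
def MixedNet.CET (X : Finset ℕ) (N N' : MixedNet) : Prop :=
  ∃ u v w₁ w₂ u' : ℕ, ∃ f : Sym2 ℕ, MixedNet.CETWitness X N N' u v w₁ w₂ u' f

/-- A CET₁ is a CET whose recipient edge is incident with one of the two donor
edges. -/
def MixedNet.CET1 (X : Finset ℕ) (N N' : MixedNet) : Prop :=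
  ∃ u v w₁ w₂ u' : ℕ, ∃ f : Sym2 ℕ,
    MixedNet.CETWitness X N N' u v w₁ w₂ u' f ∧ (w₁ ∈ f ∨ w₂ ∈ f)

/-- The CET with the given witness data changes the location of a pair of
parallel edges: its two donor edges are edges of a 3-cycle and its recipient
edge is an edge of a 2-cycle. -/
def ChangesParallel (N : MixedNet) (u w₁ w₂ : ℕ) (f : Sym2 ℕ) : Prop :=
  (∃ c : List ℕ, IsCycleIn N.underlying c ∧ c.length = 3 ∧
    s(u, w₁) ∈ cycleEdges c ∧ s(u, w₂) ∈ cycleEdges c) ∧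
  (∃ c : List ℕ, IsCycleIn N.underlying c ∧ c.length = 2 ∧ f ∈ cycleEdges c)

/-- The CET with the given witness data exchanges a loop for two pairs of
parallel edges or vice versa. -/
def ExchangesLoop (N : MixedNet) (u w₁ w₂ : ℕ) (f : Sym2 ℕ) : Prop :=
  ((∃ c : List ℕ, IsCycleIn N.underlying c ∧ c.length = 3 ∧
      s(u, w₁) ∈ cycleEdges c ∧ s(u, w₂) ∈ cycleEdges c) ∧
    f.IsDiag ∧ f ∈ N.underlying) ∨
  (w₁ = w₂ ∧
    (∃ c : List ℕ, IsCycleIn N.underlying c ∧ c.length = 2 ∧ f ∈ cycleEdges c))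

/-- CET⁻: remove a reticulation. Either delete the vertex carrying a loop (and
suppress the resulting degree-two vertex), or undirect the second edge directed
into `v`, delete the reticulation edge `(u,v)` and suppress `u` and `v`. -/
def MixedNet.CETminus (X : Finset ℕ) (N N' : MixedNet) : Prop :=
  IsSemiDirected X N ∧ IsSemiDirected X N' ∧
  ((∃ u w a b : ℕ, ∃ K : MixedNet,
      (u, u) ∈ N.dedges ∧
      K.verts = N.verts.erase u ∧
      ((s(u, w) ∈ N.uedges ∧ K.uedges = N.uedges.erase s(u, w) ∧
          K.dedges = N.dedges.erase (u, u)) ∨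
       (∃ q : ℕ, ∃ D₀ : Multiset (ℕ × ℕ),
          N.dedges.erase (u, u) = (u, w) ::ₘ (q, w) ::ₘ D₀ ∧
          K.dedges = D₀ ∧ K.uedges = s(q, w) ::ₘ N.uedges)) ∧
      SuppressVertexAt K w a b N') ∨
   (∃ u v p a b a' b' : ℕ, ∃ K K' : MixedNet, ∃ D₀ : Multiset (ℕ × ℕ),
      u ≠ v ∧ ¬ N.IsRet u ∧
      N.dedges = (u, v) ::ₘ (p, v) ::ₘ D₀ ∧
      K.verts = N.verts ∧ K.dedges = D₀ ∧ K.uedges = s(p, v) ::ₘ N.uedges ∧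
      SuppressVertexAt K u a b K' ∧ SuppressVertexAt K' v a' b' N'))

/-- Subdivide an edge of `N` with the fresh vertex `v`, giving `K`.
Subdividing a directed edge `(a,b)` gives an undirected edge `{a,v}` and a
directed edge `(v,b)`; subdividing a loop `(w,w)` gives two parallel edges
directed into `w`. -/
def Subdivide (N : MixedNet) (v : ℕ) (K : MixedNet) : Prop :=
  v ∉ N.verts ∧ K.verts = insert v N.verts ∧
  ((∃ a b U₀, N.uedges = s(a, b) ::ₘ U₀ ∧
      K.uedges = s(a, v) ::ₘ s(v, b) ::ₘ U₀ ∧ K.dedges = N.dedges) ∨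
   (∃ a b D₀, N.dedges = (a, b) ::ₘ D₀ ∧ a ≠ b ∧
      K.dedges = (v, b) ::ₘ D₀ ∧ K.uedges = s(a, v) ::ₘ N.uedges) ∨
   (∃ w D₀, N.dedges = (w, w) ::ₘ D₀ ∧
      K.dedges = (v, w) ::ₘ (v, w) ::ₘ D₀ ∧ K.uedges = N.uedges))

/-- CET⁺: add a reticulation, either (i) subdivide an edge with `v`, attach a
new vertex `u` by an undirected edge and add a directed loop at `u`, or (ii)
subdivide an edge with `v`, subdivide an edge of the result with `u`, add the
directed edge `(u,v)` and direct one of the two other edges incident with `v`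
into `v` (provided the result is a semi-directed network on `X`). -/
def MixedNet.CETplus (X : Finset ℕ) (N N' : MixedNet) : Prop :=
  IsSemiDirected X N ∧ IsSemiDirected X N' ∧
  ∃ u v : ℕ, ∃ K : MixedNet, Subdivide N v K ∧ u ≠ v ∧
  ((u ∉ K.verts ∧ N'.verts = insert u K.verts ∧
      N'.uedges = s(u, v) ::ₘ K.uedges ∧ N'.dedges = (u, u) ::ₘ K.dedges) ∨
   (∃ K' : MixedNet, Subdivide K u K' ∧ N'.verts = K'.verts ∧
      ∃ w : ℕ, ∃ U₀ : Multiset (Sym2 ℕ), K'.uedges = s(w, v) ::ₘ U₀ ∧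
        N'.uedges = U₀ ∧ N'.dedges = (u, v) ::ₘ (w, v) ::ₘ K'.dedges))

/-- An extended CET: a single CET, CET⁺ or CET⁻. -/
def ExtCET (X : Finset ℕ) (N N' : MixedNet) : Prop :=
  MixedNet.CET X N N' ∨ MixedNet.CETplus X N N' ∨ MixedNet.CETminus X N N'

/-- The leaves `y 1, …, y m` form a caterpillar hanging below the vertex `v`. -/
def CatBelow (N : RootedNet) (v : ℕ) (m : ℕ) (y : ℕ → ℕ) : Prop :=
  1 ≤ m ∧
  ((m = 1 ∧ (v, y 1) ∈ N.edges) ∨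
   (2 ≤ m ∧ ∃ p : ℕ → ℕ,
      (∀ i, 1 ≤ i → i ≤ m → (p i, y i) ∈ N.edges) ∧
      p 1 = p 2 ∧
      (∀ i, 2 ≤ i → i + 1 ≤ m → (p (i + 1), p i) ∈ N.edges) ∧
      (v, p m) ∈ N.edges))

/-- `x` enumerates the `n`-element leaf set `X` as `x 1, …, x n`. -/
def IsEnum (X : Finset ℕ) (n : ℕ) (x : ℕ → ℕ) : Prop :=
  (∀ i, 1 ≤ i → i ≤ n → x i ∈ X) ∧
  (∀ a ∈ X, ∃ i, 1 ≤ i ∧ i ≤ n ∧ x i = a) ∧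
  (∀ i j, 1 ≤ i → i ≤ n → 1 ≤ j → j ≤ n → x i = x j → i = j)

/-- `N` is the rooted level-1 network on `X = {x 1, …, x n}` with exactly `k`
reticulations in standard form. -/
def InStandardForm (X : Finset ℕ) (n k : ℕ) (x : ℕ → ℕ) (N : RootedNet) : Prop :=
  N.IsPhylo X ∧ Level1 N.underlying ∧ N.numRet = k ∧ n = X.card ∧
  ((k = 0 ∧ CatBelow N N.root n x) ∨
   (1 ≤ k ∧ ∃ u v p : ℕ → ℕ,
      (∀ i, 1 ≤ i → i ≤ k →
        IsCycleIn N.underlying [u i, p i, v i] ∧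
        (u i, p i) ∈ N.edges ∧ (u i, v i) ∈ N.edges ∧ (p i, v i) ∈ N.edges ∧
        N.inDeg (v i) = 2) ∧
      (∀ c : List ℕ, IsCycleIn N.underlying c →
        ∃ i, 1 ≤ i ∧ i ≤ k ∧ cycleEdges c = cycleEdges [u i, p i, v i]) ∧
      (∀ i j, 1 ≤ i → i ≤ k → 1 ≤ j → j ≤ k →
        cycleEdges [u i, p i, v i] = cycleEdges [u j, p j, v j] → i = j) ∧
      (∀ i, 1 ≤ i → i ≤ k → (p i, x i) ∈ N.edges) ∧
      (N.root, u 1) ∈ N.edges ∧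
      (∀ i, 1 ≤ i → i + 1 ≤ k → (v i, u (i + 1)) ∈ N.edges) ∧
      CatBelow N (v k) (n - k) (fun j => x (k + j))))

/-- `N` is of standard shape: it is in standard form up to a permutation of its
leaf labels, i.e. in standard form for some enumeration of `X`. -/
def StandardShape (X : Finset ℕ) (k : ℕ) (N : RootedNet) : Prop :=
  ∃ x : ℕ → ℕ, IsEnum X X.card x ∧ InStandardForm X X.card k x N

/-- The extended CET distance within the collection of networks satisfying `P`
(measured between isomorphism classes). -/
noncomputable def extDist (X : Finset ℕ) (P : MixedNet → Prop)
    (N N' : MixedNet) : ℕ :=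
  sInf {m : ℕ | ∃ L : List MixedNet, L.Chain' (ExtCET X) ∧ L.head? = some N ∧
    (∃ M, L.getLast? = some M ∧ MixedNet.Iso X M N') ∧ (∀ K ∈ L, P K) ∧
    L.length = m + 1}


/-- consecutive-edge list of a path -/
def pe : List ℕ → List (Sym2 ℕ)
  | a :: b :: t => s(a, b) :: pe (b :: t)
  | _ => []

@[simp] lemma pe_nil : pe [] = [] := rfl
@[simp] lemma pe_single (a : ℕ) : pe [a] = [] := rfl
@[simp] lemma pe_cons_cons (a b : ℕ) (t : List ℕ) :
    pe (a :: b :: t) = s(a, b) :: pe (b :: t) := rfl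

lemma pe_mem_vert {e : Sym2 ℕ} {x : ℕ} : ∀ {l : List ℕ}, e ∈ pe l → x ∈ e → x ∈ l
  | [], h, _ => by simp [pe] at h
  | [a], h, _ => by simp [pe] at h
  | a :: b :: t, h, hx => by
    rcases (by simpa using h : e = s(a,b) ∨ e ∈ pe (b :: t)) with h' | h'
    · subst h'
      rcases Sym2.mem_iff.mp hx with rfl | rfl
      · exact List.mem_cons_self
      · exact List.mem_cons_of_mem _ (List.mem_cons_self)
    · exact List.mem_cons_of_mem _ (pe_mem_vert h' hx)

lemma pe_chain {r : ℕ → ℕ → Prop} {e : Sym2 ℕ} :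
    ∀ {l : List ℕ}, List.Chain' r l → e ∈ pe l → ∃ a b, r a b ∧ e = s(a, b)
  | [], _, h => by simp [pe] at h
  | [a], _, h => by simp [pe] at h
  | a :: b :: t, hc, h => by
    rcases (by simpa using h : e = s(a,b) ∨ e ∈ pe (b :: t)) with h' | h'
    · exact ⟨a, b, hc.rel_head, h'⟩
    · exact pe_chain hc.tail h'

lemma pe_nodup : ∀ {l : List ℕ}, l.Nodup → (pe l).Nodup
  | [], _ => by simp
  | [a], _ => by simp
  | a :: b :: t, h => by
    rw [pe_cons_cons, List.nodup_cons]
    refine ⟨fun hmem => ?_, pe_nodup h.of_cons⟩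
    have : a ∈ b :: t := pe_mem_vert hmem (by simp)
    exact (List.nodup_cons.mp h).1 this

lemma pe_concat : ∀ {l : List ℕ} {p a : ℕ}, l.getLast? = some p →
    pe (l ++ [a]) = pe l ++ [s(p, a)]
  | [], p, a, h => by simp at h
  | [x], p, a, h => by simp at h; subst h; simp
  | x :: y :: t, p, a, h => by
    have h' : (y :: t).getLast? = some p := by
      rwa [List.getLast?_cons_cons] at h
    have := pe_concat (l := y :: t) (a := a) h'
    simp only [List.cons_append, pe_cons_cons] at *
    rw [this]

lemma pe_reverse : ∀ {l : List ℕ}, pe l.reverse = (pe l).reverse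
  | [] => by simp
  | [a] => by simp
  | a :: b :: t => by
    have IH := pe_reverse (l := b :: t)
    have hg : (b :: t).reverse.getLast? = some b := by
      rw [List.getLast?_reverse]; rfl
    calc pe ((a :: b :: t).reverse) = pe ((b :: t).reverse ++ [a]) := by simp
    _ = pe ((b :: t).reverse) ++ [s(b, a)] := pe_concat hg
    _ = (pe (b :: t)).reverse ++ [s(a, b)] := by rw [IH, Sym2.eq_swap]
    _ = (pe (a :: b :: t)).reverse := by simp

lemma pe_append : ∀ (l₁ : List ℕ) (a : ℕ) (l₂ : List ℕ),
    pe (l₁ ++ a :: l₂) = pe (l₁ ++ [a]) ++ pe (a :: l₂)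
  | [], a, l₂ => by simp
  | [x], a, l₂ => by simp
  | x :: y :: t, a, l₂ => by
    have := pe_append (y :: t) a l₂
    simp only [List.cons_append, pe_cons_cons] at *
    rw [this]

lemma pe_out_edge {r : ℕ → ℕ → Prop} :
    ∀ {l : List ℕ} {v z : ℕ}, List.Chain' r (l ++ [v]) → z ∈ l →
      ∃ y, r z y ∧ s(z, y) ∈ pe (l ++ [v])
  | [], v, z, _, hz => by simp at hz
  | [x], v, z, hc, hz => by
    simp at hz; subst hz
    exact ⟨v, by simpa using hc.rel_head, by simp⟩
  | x :: y :: t, v, z, hc, hz => by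
    rcases List.mem_cons.mp hz with rfl | hz
    · exact ⟨y, (by simpa using hc.rel_head), by simp⟩
    · obtain ⟨w, hw, hmem⟩ := pe_out_edge (l := y :: t) hc.tail hz
      refine ⟨w, hw, ?_⟩
      simp only [List.cons_append, pe_cons_cons]
      exact List.mem_cons_of_mem _ hmem

lemma pe_last_edge {l : List ℕ} {p v : ℕ} (hv : v ∉ l) (hp : l.getLast? = some p)
    {e : Sym2 ℕ} (he : e ∈ pe (l ++ [v])) (hve : v ∈ e) : e = s(p, v) := by
  rw [pe_concat hp] at he
  rcases List.mem_append.mp he with h | h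
  · exact absurd (pe_mem_vert h hve) hv
  · simpa using h

lemma chain_pred {r : ℕ → ℕ → Prop} :
    ∀ {l : List ℕ} {x z : ℕ}, List.Chain' r (x :: l) → z ∈ l → ∃ y, r y z
  | [], x, z, _, hz => by simp at hz
  | a :: t, x, z, hc, hz => by
    rcases List.mem_cons.mp hz with rfl | hz
    · exact ⟨x, hc.rel_head⟩
    · exact chain_pred hc.tail hz

lemma chain_transGen {r : ℕ → ℕ → Prop} :
    ∀ {l : List ℕ} {x z : ℕ}, List.Chain' r (x :: l) → z ∈ l → Relation.TransGen r x z
  | [], x, z, _, hz => by simp at hz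
  | a :: t, x, z, hc, hz => by
    rcases List.mem_cons.mp hz with rfl | hz
    · exact Relation.TransGen.single hc.rel_head
    · exact (chain_transGen hc.tail hz).head hc.rel_head

lemma chain_nodup {r : ℕ → ℕ → Prop} (hac : ∀ v, ¬ Relation.TransGen r v v) :
    ∀ {l : List ℕ}, List.Chain' r l → l.Nodup
  | [], _ => by simp
  | x :: t, hc => by
    rw [List.nodup_cons]
    refine ⟨fun hx => hac x (chain_transGen hc hx), chain_nodup hac hc.tail⟩

lemma chain_rtg_last {r : ℕ → ℕ → Prop} :
    ∀ {l : List ℕ} {x z : ℕ}, List.Chain' r (x :: l) → (x :: l).getLast? = some z →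
      Relation.ReflTransGen r x z
  | [], x, z, _, hz => by simp at hz; subst hz; rfl
  | a :: t, x, z, hc, hz => by
    rw [List.getLast?_cons_cons] at hz
    exact (chain_rtg_last hc.tail hz).head hc.rel_head

lemma chain_rtg {r : ℕ → ℕ → Prop} {l : List ℕ} {a z : ℕ} (hc : List.Chain' r l)
    (ha : a ∈ l) (hz : l.getLast? = some z) : Relation.ReflTransGen r a z := by
  obtain ⟨s, t, rfl⟩ := List.append_of_mem ha
  have h1 : List.Chain' r (a :: t) := hc.suffix ⟨s, rfl⟩
  have h2 : (a :: t).getLast? = some z := by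
    rwa [List.getLast?_append_of_ne_nil s (by simp)] at hz
  exact chain_rtg_last h1 h2


lemma pe_eq_zipWith : ∀ l : List ℕ, pe l = List.zipWith (fun a b => s(a, b)) l l.tail
  | [] => rfl
  | [a] => rfl
  | a :: b :: t => by
    rw [pe_cons_cons, pe_eq_zipWith (b :: t)]
    rfl

lemma cycleEdges_eq (x : ℕ) (xs : List ℕ) :
    cycleEdges (x :: xs) = ↑(pe ((x :: xs) ++ [x])) := by
  have hrot : (x :: xs).rotate 1 = xs ++ [x] := by
    rw [List.rotate_cons_succ, List.rotate_zero]
  have hz : pe ((x :: xs) ++ [x]) =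
      List.zipWith (fun a b => s(a, b)) (x :: xs) (xs ++ [x]) := by
    rw [pe_eq_zipWith]
    have : (x :: xs) ++ [x] = (x :: xs) ++ [x] := rfl
    calc List.zipWith (fun a b => s(a, b)) ((x :: xs) ++ [x]) ((x :: xs) ++ [x]).tail
        = List.zipWith (fun a b => s(a, b)) ((x :: xs) ++ [x]) ((xs ++ [x]) ++ []) := by
          simp
      _ = List.zipWith (fun a b => s(a, b)) (x :: xs) (xs ++ [x]) ++
            List.zipWith (fun a b => s(a, b)) [x] [] := by
          exact List.zipWith_append (by simp)
      _ = List.zipWith (fun a b => s(a, b)) (x :: xs) (xs ++ [x]) := by simp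
  rw [cycleEdges, hrot, hz]

lemma cycleEdges_struct (w v : ℕ) (P' Q' : List ℕ) :
    cycleEdges ((w :: P') ++ v :: Q'.reverse) =
      (↑(pe ((w :: P') ++ [v])) + ↑(pe ((w :: Q') ++ [v])) : Multiset (Sym2 ℕ)) := by
  have h1 : (w :: P') ++ v :: Q'.reverse = w :: (P' ++ v :: Q'.reverse) := by simp
  rw [h1, cycleEdges_eq]
  have h2 : (w :: (P' ++ v :: Q'.reverse)) ++ [w] =
      (w :: P') ++ v :: (Q'.reverse ++ [w]) := by simp
  rw [h2, pe_append]
  have h3 : v :: (Q'.reverse ++ [w]) = ((w :: Q') ++ [v]).reverse := by simp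
  rw [h3, pe_reverse, ← Multiset.coe_add, Multiset.coe_reverse]

lemma list_le_of_nodup {L : List (Sym2 ℕ)} {M : Multiset (Sym2 ℕ)}
    (h1 : L.Nodup) (h2 : ∀ e ∈ L, e ∈ M) : ↑L ≤ M := by
  rw [Multiset.le_iff_count]
  intro x
  by_cases hx : x ∈ L
  · calc Multiset.count x ↑L = L.count x := Multiset.coe_count x L
    _ ≤ 1 := List.nodup_iff_count_le_one.mp h1 x
    _ ≤ Multiset.count x M := Multiset.one_le_count_iff_mem.mpr (h2 x hx)
  · have : Multiset.count x ↑L = L.count x := Multiset.coe_count x L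
    rw [this, List.count_eq_zero_of_not_mem hx]
    exact Nat.zero_le _

lemma two_le_card {α : Type*} {s : Multiset α} {x y : α}
    (hx : x ∈ s) (hy : y ∈ s) (hxy : x ≠ y) : 2 ≤ Multiset.card s := by
  obtain ⟨t, rfl⟩ := Multiset.exists_cons_of_mem hx
  have hyt : y ∈ t := by
    rcases Multiset.mem_cons.mp hy with rfl | h
    · exact absurd rfl hxy.symm
    · exact h
  obtain ⟨u, rfl⟩ := Multiset.exists_cons_of_mem hyt
  simp only [Multiset.card_cons]
  omega

lemma card_eq_sum_filter (V : Finset ℕ) (f : ℕ × ℕ → ℕ) :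
    ∀ (s : Multiset (ℕ × ℕ)), (∀ e ∈ s, f e ∈ V) →
      Multiset.card s = ∑ v ∈ V, Multiset.card (s.filter (fun e => f e = v)) := by
  intro s
  induction s using Multiset.induction_on with
  | empty => simp
  | cons a s ih =>
    intro h
    have ha : f a ∈ V := h a (Multiset.mem_cons_self a s)
    have ihs := ih (fun e he => h e (Multiset.mem_cons_of_mem he))
    simp only [Multiset.filter_cons, Multiset.card_add, Multiset.card_cons]
    rw [Finset.sum_add_distrib, ← ihs]
    have : ∀ v, Multiset.card (if f a = v then ({a} : Multiset (ℕ × ℕ)) else 0) =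
        if f a = v then 1 else 0 := by
      intro v; split <;> simp
    rw [Finset.sum_congr rfl (fun v _ => this v), Finset.sum_ite_eq V (f a) (fun _ => 1),
      if_pos ha]
    omega

/-- Edge relation of a rooted network. -/
def erel (N : RootedNet) (a b : ℕ) : Prop := (a, b) ∈ N.edges

lemma exists_root_path {X : Finset ℕ} {N : RootedNet} (hN : N.IsPhylo X) :
    ∀ z ∈ N.verts, ∃ A : List ℕ,
      List.Chain' (erel N) A ∧ A.head? = some N.root ∧ A.getLast? = some z := by
  classical
  obtain ⟨hXne, hXV, hEV, hac, hrV, hr0, hr1, hleaf, hleafin, hdich⟩ := hN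
  set Anc : ℕ → Finset ℕ :=
    fun z => N.verts.filter (fun a => Relation.ReflTransGen (erel N) a z) with hAnc
  suffices H : ∀ n, ∀ z ∈ N.verts, (Anc z).card ≤ n → ∃ A : List ℕ,
      List.Chain' (erel N) A ∧ A.head? = some N.root ∧ A.getLast? = some z by
    exact fun z hz => H (Anc z).card z hz le_rfl
  intro n
  induction n with
  | zero =>
    intro z hz hcard
    exfalso
    have h2 : z ∈ Anc z := Finset.mem_filter.mpr ⟨hz, Relation.ReflTransGen.refl⟩
    have := Finset.card_pos.mpr ⟨z, h2⟩
    omega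
  | succ n ih =>
    intro z hz hcard
    by_cases hzr : z = N.root
    · subst hzr
      exact ⟨[N.root], List.isChain_singleton _, rfl, rfl⟩
    · have hindeg : N.inDeg z ≠ 0 := by
        by_cases hzX : z ∈ X
        · rw [hleafin z hz ((hleaf z hz).mp hzX)]; omega
        · have hout : N.outDeg z ≠ 0 := fun h => hzX ((hleaf z hz).mpr h)
          rcases hdich z hz hzr hout with ⟨h1, _⟩ | ⟨h1, _⟩ <;> omega
      obtain ⟨e, he⟩ : ∃ e, e ∈ N.edges.filter (fun e => e.2 = z) := by
        rw [RootedNet.inDeg] at hindeg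
        exact Multiset.exists_mem_of_ne_zero (fun h => hindeg (by rw [h]; simp))
      rw [Multiset.mem_filter] at he
      obtain ⟨heE, he2⟩ := he
      have hq : (e.1, z) ∈ N.edges := by
        have : e = (e.1, z) := Prod.ext rfl he2
        rwa [this] at heE
      have hqV : e.1 ∈ N.verts := (hEV e heE).1
      have hsub : Anc e.1 ⊆ (Anc z).erase z := by
        intro a ha
        rw [hAnc, Finset.mem_filter] at ha
        obtain ⟨haV, har⟩ := ha
        refine Finset.mem_erase.mpr ⟨?_, Finset.mem_filter.mpr ⟨haV, har.tail hq⟩⟩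
        intro haz
        subst haz
        exact hac a (Relation.TransGen.tail' har hq)
      have hcard' : (Anc e.1).card ≤ n := by
        have h1 := Finset.card_le_card hsub
        have h2 : z ∈ Anc z := Finset.mem_filter.mpr ⟨hz, Relation.ReflTransGen.refl⟩
        have h3 := Finset.card_erase_of_mem h2
        have h4 : 1 ≤ (Anc z).card := Finset.card_pos.mpr ⟨z, h2⟩
        omega
      obtain ⟨A, hA, hAh, hAl⟩ := ih e.1 hqV hcard'
      have hAne : A ≠ [] := by intro h; rw [h] at hAh; simp at hAh
      refine ⟨A ++ [z], ?_, ?_, List.getLast?_concat⟩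
      · unfold List.Chain'
        rw [List.isChain_append]
        refine ⟨hA, List.isChain_singleton z, fun x hx y hy => ?_⟩
        simp only [List.head?_cons, Option.mem_def, Option.some.injEq] at hy
        rw [hAl] at hx
        simp only [Option.mem_def, Option.some.injEq] at hx
        subst hx; subst hy
        exact hq
      · rw [List.head?_append_of_ne_nil _ hAne]
        exact hAh

/-- Canonical cycle data at a reticulation. -/
def CanCyc (N : RootedNet) (v : ℕ) : Prop :=
  ∃ c : List ℕ,
    IsCycleIn N.underlying c ∧ 3 ≤ c.length ∧ v ∈ c ∧
    (∀ z ∈ c, z ≠ v → z ∈ N.verts ∧ z ≠ N.root ∧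
      ∃ y, (z, y) ∈ N.edges ∧ s(z, y) ∈ cycleEdges c) ∧
    (∀ e ∈ cycleEdges c, v ∈ e → ∃ q, e = s(q, v) ∧ (q, v) ∈ N.edges) ∧
    (∃ e ∈ cycleEdges c, v ∈ e) ∧
    (∀ e ∈ cycleEdges c, ∀ x ∈ e, x ∈ c)

lemma exists_canCyc {X : Finset ℕ} {N : RootedNet} (hN : N.IsPhylo X)
    (hl : Level1 N.underlying) {v : ℕ} (hv : v ∈ N.verts) (hdeg : N.inDeg v = 2) :
    CanCyc N v := by
  classical
  have hpath := exists_root_path hN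
  obtain ⟨hXne, hXV, hEV, hac, hrV, hr0, hr1, hleaf, hleafin, hdich⟩ := hN
  have hnl : ∀ a, (a, a) ∉ N.edges := fun a h => hac a (Relation.TransGen.single h)
  -- the two parents
  rw [RootedNet.inDeg] at hdeg
  obtain ⟨e₁, e₂, hfil⟩ := Multiset.card_eq_two.mp hdeg
  have he₁f : e₁ ∈ N.edges.filter (fun e => e.2 = v) := by rw [hfil]; simp
  have he₂f : e₂ ∈ N.edges.filter (fun e => e.2 = v) := by rw [hfil]; simp
  have he₁eq : (e₁.1, v) = e₁ := by
    have h2 := (Multiset.mem_filter.mp he₁f).2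
    rw [← h2]
  have he₂eq : (e₂.1, v) = e₂ := by
    have h2 := (Multiset.mem_filter.mp he₂f).2
    rw [← h2]
  have hp₁v : (e₁.1, v) ∈ N.edges := by
    rw [he₁eq]; exact Multiset.mem_of_mem_filter he₁f
  have hp₂v : (e₂.1, v) ∈ N.edges := by
    rw [he₂eq]; exact Multiset.mem_of_mem_filter he₂f
  set p₁ := e₁.1 with hp₁def
  set p₂ := e₂.1 with hp₂def
  -- parents are distinct, else a 2-cycle
  have hp₁p₂ : p₁ ≠ p₂ := by
    intro hpp
    have hcnt : 2 ≤ N.edges.count (p₁, v) := by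
      have h1 : (N.edges.filter (fun e => e.2 = v)).count (p₁, v) = 2 := by
        rw [hfil, ← he₁eq, hpp, ← he₂eq, ← hpp]
        simp [Multiset.count_cons, Multiset.count_singleton]
      calc 2 = (N.edges.filter (fun e => e.2 = v)).count (p₁, v) := h1.symm
        _ ≤ N.edges.count (p₁, v) := Multiset.count_le_of_le _ (Multiset.filter_le _ _)
    have hp₁ne : p₁ ≠ v := fun h => hnl v (h ▸ hp₁v)
    have hcyc2 : IsCycleIn N.underlying [p₁, v] := by
      refine ⟨by simp, by simp [hp₁ne], ?_⟩
      have hceq : cycleEdges [p₁, v] = (s(p₁, v) ::ₘ {s(p₁, v)} : Multiset (Sym2 ℕ)) := by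
        rw [show [p₁, v] = p₁ :: [v] from rfl, cycleEdges_eq]
        have hpe : pe ((p₁ :: [v]) ++ [p₁]) = [s(p₁, v), s(v, p₁)] := rfl
        rw [hpe, show s(v, p₁) = s(p₁, v) from Sym2.eq_swap]
        rfl
      rw [hceq, RootedNet.underlying]
      have hle : ((p₁, v) ::ₘ {(p₁, v)} : Multiset (ℕ × ℕ)) ≤ N.edges := by
        rw [Multiset.le_iff_count]
        intro x
        by_cases hx : x = (p₁, v)
        · subst hx; simpa using hcnt
        · simp [Multiset.count_cons, Multiset.count_singleton, hx]
      have := Multiset.map_le_map (f := fun e => s(e.1, e.2)) hle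
      simpa using this
    have := hl.1 [p₁, v] hcyc2
    simp at this
  -- paths from the root
  obtain ⟨A, hA, hAh, hAl⟩ := hpath p₁ (hEV _ hp₁v).1
  obtain ⟨B, hB, hBh, hBl⟩ := hpath p₂ (hEV _ hp₂v).1
  have hAnd : A.Nodup := chain_nodup hac hA
  have hBnd : B.Nodup := chain_nodup hac hB
  have hvA : v ∉ A := fun hvA =>
    hac v (Relation.TransGen.tail' (chain_rtg hA hvA hAl) hp₁v)
  have hvB : v ∉ B := fun hvB =>
    hac v (Relation.TransGen.tail' (chain_rtg hB hvB hBl) hp₂v)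
  have hrootA : N.root ∈ A := by
    cases A with
    | nil => simp at hAh
    | cons a t => simp at hAh; subst hAh; exact List.mem_cons_self
  have hrootB : N.root ∈ B := by
    cases B with
    | nil => simp at hBh
    | cons a t => simp at hBh; subst hBh; exact List.mem_cons_self
  -- the last common vertex w
  set F := A.filter (fun a => decide (a ∈ B)) with hFdef
  have hFne : F ≠ [] := by
    have : N.root ∈ F := by
      rw [hFdef, List.mem_filter]
      exact ⟨hrootA, by simpa using hrootB⟩
    exact List.ne_nil_of_mem this
  set w := F.getLast hFne with hwdef
  have hwF : w ∈ F := List.getLast_mem hFne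
  have hwA : w ∈ A := (List.mem_filter.mp hwF).1
  have hwB : w ∈ B := by have := (List.mem_filter.mp hwF).2; simpa using this
  obtain ⟨A₁, A₂, hAeq⟩ := List.append_of_mem hwA
  obtain ⟨B₁, B₂, hBeq⟩ := List.append_of_mem hwB
  have hwA₂ : w ∉ A₂ := by
    have h := hAeq ▸ hAnd
    have := (List.nodup_append.mp h).2.1
    exact (List.nodup_cons.mp this).1
  have hwB₂ : w ∉ B₂ := by
    have h := hBeq ▸ hBnd
    have := (List.nodup_append.mp h).2.1
    exact (List.nodup_cons.mp this).1
  have hA₂B : ∀ x ∈ A₂, x ∉ B := by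
    intro x hx hxB
    have hFsplit : F = A₁.filter (fun a => decide (a ∈ B)) ++
        w :: A₂.filter (fun a => decide (a ∈ B)) := by
      rw [hFdef, hAeq, List.filter_append, List.filter_cons]
      simp [hwB]
    have hxF : x ∈ A₂.filter (fun a => decide (a ∈ B)) := by
      rw [List.mem_filter]; exact ⟨hx, by simpa using hxB⟩
    have hne2 : A₂.filter (fun a => decide (a ∈ B)) ≠ [] := List.ne_nil_of_mem hxF
    have hlast : F.getLast? = (A₂.filter (fun a => decide (a ∈ B))).getLast? := by
      rw [hFsplit, List.getLast?_append_of_ne_nil _ (by simp),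
        show w :: A₂.filter (fun a => decide (a ∈ B)) =
          [w] ++ A₂.filter (fun a => decide (a ∈ B)) from rfl,
        List.getLast?_append_of_ne_nil _ hne2]
    have hw' : w ∈ A₂.filter (fun a => decide (a ∈ B)) := by
      have h1 : F.getLast? = some w := List.getLast?_eq_getLast hFne
      rw [hlast] at h1
      exact List.mem_of_mem_getLast? h1
    exact hwA₂ ((List.mem_filter.mp hw').1)
  -- the two arms P and Q
  set P := w :: A₂ with hPdef
  set Q := w :: B₂ with hQdef
  have hPsuf : P <:+ A := ⟨A₁, hAeq.symm⟩
  have hQsuf : Q <:+ B := ⟨B₁, hBeq.symm⟩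
  have hPchain : List.Chain' (erel N) P := hA.suffix hPsuf
  have hQchain : List.Chain' (erel N) Q := hB.suffix hQsuf
  have hPnd : P.Nodup := hPsuf.sublist.nodup hAnd
  have hQnd : Q.Nodup := hQsuf.sublist.nodup hBnd
  have hvP : v ∉ P := fun h => hvA (hPsuf.sublist.mem h)
  have hvQ : v ∉ Q := fun h => hvB (hQsuf.sublist.mem h)
  have hPlast : P.getLast? = some p₁ := by
    rw [← List.getLast?_append_of_ne_nil A₁ (l₂ := P) (by simp [hPdef]), ← hAeq]
    exact hAl
  have hQlast : Q.getLast? = some p₂ := by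
    rw [← List.getLast?_append_of_ne_nil B₁ (l₂ := Q) (by simp [hQdef]), ← hBeq]
    exact hBl
  have hPQ : ∀ x, x ∈ P → x ∈ Q → x = w := by
    intro x hxP hxQ
    rcases List.mem_cons.mp hxP with rfl | hxA₂
    · rfl
    · exact absurd (hQsuf.sublist.mem hxQ) (hA₂B x hxA₂)
  have hp₁P : p₁ ∈ P := List.mem_of_mem_getLast? hPlast
  have hp₂Q : p₂ ∈ Q := List.mem_of_mem_getLast? hQlast
  -- chains extended to v
  have hPv : List.Chain' (erel N) (P ++ [v]) := by
    unfold List.Chain'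
    rw [List.isChain_append]
    refine ⟨hPchain, List.isChain_singleton v, fun x hx y hy => ?_⟩
    rw [hPlast] at hx
    simp only [Option.mem_def, Option.some.injEq, List.head?_cons] at hx hy
    subst hx; subst hy
    exact hp₁v
  have hQv : List.Chain' (erel N) (Q ++ [v]) := by
    unfold List.Chain'
    rw [List.isChain_append]
    refine ⟨hQchain, List.isChain_singleton v, fun x hx y hy => ?_⟩
    rw [hQlast] at hx
    simp only [Option.mem_def, Option.some.injEq, List.head?_cons] at hx hy
    subst hx; subst hy
    exact hp₂v
  have hPvnd : (P ++ [v]).Nodup := by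
    rw [List.nodup_append]
    exact ⟨hPnd, List.nodup_singleton v, fun x hx y hy => by
      simp at hy; subst hy; exact fun h => hvP (h ▸ hx)⟩
  have hQvnd : (Q ++ [v]).Nodup := by
    rw [List.nodup_append]
    exact ⟨hQnd, List.nodup_singleton v, fun x hx y hy => by
      simp at hy; subst hy; exact fun h => hvQ (h ▸ hx)⟩
  -- the cycle
  set c := P ++ v :: B₂.reverse with hcdef
  have hce : cycleEdges c = ↑(pe (P ++ [v])) + ↑(pe (Q ++ [v])) :=
    cycleEdges_struct w v A₂ B₂
  have hmem₁ : ∀ e ∈ pe (P ++ [v]), e ∈ N.underlying := by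
    intro e he
    obtain ⟨a, b, hab, rfl⟩ := pe_chain hPv he
    exact Multiset.mem_map.mpr ⟨(a, b), hab, rfl⟩
  have hmem₂ : ∀ e ∈ pe (Q ++ [v]), e ∈ N.underlying := by
    intro e he
    obtain ⟨a, b, hab, rfl⟩ := pe_chain hQv he
    exact Multiset.mem_map.mpr ⟨(a, b), hab, rfl⟩
  have hdisj : ∀ e ∈ pe (P ++ [v]), e ∈ pe (Q ++ [v]) → False := by
    intro e h1 h2
    by_cases hve : v ∈ e
    · have he1 : e = s(p₁, v) := pe_last_edge hvP hPlast h1 hve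
      have he2 : e = s(p₂, v) := pe_last_edge hvQ hQlast h2 hve
      rw [he1] at he2
      rcases Sym2.eq_iff.mp he2 with ⟨h, _⟩ | ⟨h, h'⟩
      · exact hp₁p₂ h
      · exact hvP (h ▸ hp₁P)
    · obtain ⟨a, b, hab, rfl⟩ := pe_chain hPv h1
      have haP : a ∈ P := by
        rcases List.mem_append.mp (pe_mem_vert h1 (Sym2.mem_mk_left a b)) with h | h
        · exact h
        · simp at h; subst h; exact absurd (Sym2.mem_mk_left _ _) hve
      have hbP : b ∈ P := by
        rcases List.mem_append.mp (pe_mem_vert h1 (Sym2.mem_mk_right a b)) with h | h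
        · exact h
        · simp at h; subst h; exact absurd (Sym2.mem_mk_right _ _) hve
      have haQ : a ∈ Q := by
        rcases List.mem_append.mp (pe_mem_vert h2 (Sym2.mem_mk_left a b)) with h | h
        · exact h
        · simp at h; subst h; exact absurd (Sym2.mem_mk_left _ _) hve
      have hbQ : b ∈ Q := by
        rcases List.mem_append.mp (pe_mem_vert h2 (Sym2.mem_mk_right a b)) with h | h
        · exact h
        · simp at h; subst h; exact absurd (Sym2.mem_mk_right _ _) hve
      have ha : a = w := hPQ a haP haQ
      have hb : b = w := hPQ b hbP hbQ
      subst ha; subst hb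
      exact hnl w hab
  have hLnd : (pe (P ++ [v]) ++ pe (Q ++ [v])).Nodup := by
    rw [List.nodup_append]
    exact ⟨pe_nodup hPvnd, pe_nodup hQvnd, fun e he f hf hef => by subst hef; exact hdisj e he hf⟩
  have hle : cycleEdges c ≤ N.underlying := by
    rw [hce, Multiset.coe_add]
    refine list_le_of_nodup hLnd ?_
    intro e he
    rcases List.mem_append.mp he with h | h
    · exact hmem₁ e h
    · exact hmem₂ e h
  have hcnd : c.Nodup := by
    rw [hcdef, List.nodup_append]
    refine ⟨hPnd, ?_, ?_⟩
    · rw [List.nodup_cons]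
      refine ⟨fun h => hvB (hQsuf.sublist.mem
        (List.mem_cons_of_mem _ (List.mem_reverse.mp h))), ?_⟩
      exact List.nodup_reverse.mpr (List.nodup_cons.mp hQnd).2
    · intro x hx y hx' hxy
      subst hxy
      rcases List.mem_cons.mp hx' with rfl | hx''
      · exact hvP hx
      · have hxQ : x ∈ Q := List.mem_cons_of_mem _ (List.mem_reverse.mp hx'')
        have hxw : x = w := hPQ x hx hxQ
        subst hxw
        exact hwB₂ (List.mem_reverse.mp hx'')
  have hvc : v ∈ c := List.mem_append.mpr (Or.inr (List.mem_cons_self))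
  have hA2B2 : A₂ ≠ [] ∨ B₂ ≠ [] := by
    by_contra h
    push_neg at h
    obtain ⟨h1, h2⟩ := h
    have e1 : p₁ = w := by
      rw [hPdef, h1] at hPlast
      simpa using hPlast.symm
    have e2 : p₂ = w := by
      rw [hQdef, h2] at hQlast
      simpa using hQlast.symm
    exact hp₁p₂ (e1.trans e2.symm)
  have hlen : 3 ≤ c.length := by
    have hcl : c.length = A₂.length + B₂.length + 2 := by
      rw [hcdef, hPdef]
      simp [List.length_append]
      omega
    rcases hA2B2 with h | h
    · have := List.length_pos_iff.mpr h; omega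
    · have := List.length_pos_iff.mpr h; omega
  refine ⟨c, ⟨?_, hcnd, hle⟩, hlen, hvc, ?_, ?_, ?_, ?_⟩
  · rw [hcdef, hPdef]; simp
  · -- tree-vertex-ish property for z ≠ v on c
    intro z hz hzv
    have hzPB : z ∈ P ∨ z ∈ B₂ := by
      rcases List.mem_append.mp hz with h | h
      · exact Or.inl h
      · rcases List.mem_cons.mp h with rfl | h'
        · exact absurd rfl hzv
        · exact Or.inr (List.mem_reverse.mp h')
    obtain ⟨y, hy, hsy⟩ : ∃ y, (z, y) ∈ N.edges ∧ s(z, y) ∈ cycleEdges c := by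
      rcases hzPB with h | h
      · obtain ⟨y, hy, hmem⟩ := pe_out_edge hPv h
        refine ⟨y, hy, ?_⟩
        rw [hce]
        exact Multiset.mem_add.mpr (Or.inl (by exact_mod_cast hmem))
      · obtain ⟨y, hy, hmem⟩ := pe_out_edge hQv (List.mem_cons_of_mem _ h)
        refine ⟨y, hy, ?_⟩
        rw [hce]
        exact Multiset.mem_add.mpr (Or.inr (by exact_mod_cast hmem))
    refine ⟨(hEV _ hy).1, ?_, y, hy, hsy⟩
    by_cases hzw : z = w
    · -- z = w has two distinct children, but the root has out-degree one
      subst hzw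
      obtain ⟨a, hwa, hsa⟩ := pe_out_edge hPv ((List.mem_cons_self (a := w) (l := A₂)))
      obtain ⟨b, hwb, hsb⟩ := pe_out_edge hQv ((List.mem_cons_self (a := w) (l := B₂)))
      have hab : a ≠ b := by
        intro h
        exact hdisj _ hsa (by rw [h]; exact hsb)
      have h1 : (w, a) ∈ N.edges.filter (fun e => e.1 = w) :=
        Multiset.mem_filter.mpr ⟨hwa, rfl⟩
      have h2 : (w, b) ∈ N.edges.filter (fun e => e.1 = w) :=
        Multiset.mem_filter.mpr ⟨hwb, rfl⟩
      have hout2 : 2 ≤ N.outDeg w := two_le_card h1 h2 (by simp [hab])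
      intro hzr
      rw [hzr] at hout2
      rw [hr1] at hout2
      omega
    · have hpred : ∃ y', (y', z) ∈ N.edges := by
        rcases hzPB with h | h
        · rcases List.mem_cons.mp h with h' | h'
          · exact absurd h' hzw
          · exact chain_pred hPchain h'
        · exact chain_pred hQchain h
      obtain ⟨y', hy'⟩ := hpred
      intro hzr
      subst hzr
      have hmem : (y', N.root) ∈ N.edges.filter (fun e => e.2 = N.root) :=
        Multiset.mem_filter.mpr ⟨hy', rfl⟩
      have h1 : 0 < N.inDeg N.root :=
        Multiset.card_pos_iff_exists_mem.mpr ⟨_, hmem⟩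
      omega
  · -- edges at v are directed into v
    intro e he hve
    rw [hce] at he
    rcases Multiset.mem_add.mp he with h | h
    · exact ⟨p₁, pe_last_edge hvP hPlast (by exact_mod_cast h) hve, hp₁v⟩
    · exact ⟨p₂, pe_last_edge hvQ hQlast (by exact_mod_cast h) hve, hp₂v⟩
  · -- some cycle edge contains v
    refine ⟨s(p₁, v), ?_, Sym2.mem_mk_right p₁ v⟩
    rw [hce]
    refine Multiset.mem_add.mpr (Or.inl ?_)
    have : pe (P ++ [v]) = pe P ++ [s(p₁, v)] := pe_concat hPlast
    rw [this]
    exact_mod_cast List.mem_append.mpr (Or.inr (List.mem_singleton.mpr rfl))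
  · -- vertices of cycle edges lie on c
    intro e he x hx
    rw [hce] at he
    rcases Multiset.mem_add.mp he with h | h
    · have hx' : x ∈ P ++ [v] := pe_mem_vert (by exact_mod_cast h : e ∈ pe (P ++ [v])) hx
      rcases List.mem_append.mp hx' with h' | h'
      · exact List.mem_append.mpr (Or.inl h')
      · simp at h'; subst h'; exact hvc
    · have hx' : x ∈ Q ++ [v] := pe_mem_vert (by exact_mod_cast h : e ∈ pe (Q ++ [v])) hx
      rcases List.mem_append.mp hx' with h' | h'
      · rcases List.mem_cons.mp h' with rfl | h''
        · exact List.mem_append.mpr (Or.inl (List.mem_cons_self))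
        · exact List.mem_append.mpr
            (Or.inr (List.mem_cons_of_mem _ (List.mem_reverse.mpr h'')))
      · simp at h'; subst h'; exact hvc

-- MORE AUX4 HERE

/-- A rooted binary phylogenetic level-1 network on `X` has at
most `|X| - 1` reticulations. -/
theorem rooted_level1_reticulation_bound (X : Finset ℕ) (hX : X.Nonempty)
    (N : RootedNet) (hN : N.IsPhylo X) (hl : Level1 N.underlying) :
    N.numRet ≤ X.card - 1 := by
  classical
  obtain ⟨hXne, hXV, hEV, hac, hrV, hr0, hr1, hleaf, hleafin, hdich⟩ := id hN
  have hnl : ∀ a, (a, a) ∉ N.edges := fun a h => hac a (Relation.TransGen.single h)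
  set R := N.verts.filter (fun v => N.inDeg v = 2) with hRdef
  set T := N.verts.filter (fun v => N.inDeg v = 1 ∧ N.outDeg v = 2) with hTdef
  have hRmem : ∀ v, v ∈ R ↔ v ∈ N.verts ∧ N.inDeg v = 2 := by
    intro v; rw [hRdef, Finset.mem_filter]
  have hTmem : ∀ v, v ∈ T ↔ v ∈ N.verts ∧ N.inDeg v = 1 ∧ N.outDeg v = 2 := by
    intro v; rw [hTdef, Finset.mem_filter]
  -- canonical cycles
  have hall : ∀ v : ℕ, ∃ c : List ℕ, v ∈ R →
      (IsCycleIn N.underlying c ∧ 3 ≤ c.length ∧ v ∈ c ∧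
        (∀ z ∈ c, z ≠ v → z ∈ N.verts ∧ z ≠ N.root ∧
          ∃ y, (z, y) ∈ N.edges ∧ s(z, y) ∈ cycleEdges c) ∧
        (∀ e ∈ cycleEdges c, v ∈ e → ∃ q, e = s(q, v) ∧ (q, v) ∈ N.edges) ∧
        (∃ e ∈ cycleEdges c, v ∈ e) ∧
        (∀ e ∈ cycleEdges c, ∀ x ∈ e, x ∈ c)) := by
    intro v
    by_cases hv : v ∈ R
    · obtain ⟨hv1, hv2⟩ := (hRmem v).mp hv
      obtain ⟨c, hc⟩ := exists_canCyc hN hl hv1 hv2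
      exact ⟨c, fun _ => hc⟩
    · exact ⟨[], fun h => absurd h hv⟩
  choose cyc hcyc using hall
  -- no other reticulation lies on the canonical cycle of v
  have claimB : ∀ v ∈ R, ∀ v' ∈ R, v' ≠ v → v' ∉ cyc v := by
    intro v hv v' hv' hne hmem
    obtain ⟨Hc, Hlen, Hv, H3, H4, H5, H6⟩ := hcyc v hv
    obtain ⟨Hc', Hlen', Hv', H3', H4', H5', H6'⟩ := hcyc v' hv'
    by_cases heq : cycleEdges (cyc v') = cycleEdges (cyc v)
    · obtain ⟨_, _, y, hyE, hyce⟩ := H3 v' hmem hne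
      rw [← heq] at hyce
      obtain ⟨q, hq1, hq2⟩ := H4' (s(v', y)) hyce (Sym2.mem_mk_left _ _)
      rcases Sym2.eq_iff.mp hq1 with ⟨h1, h2⟩ | ⟨h1, h2⟩
      · exact hnl v' (h1 ▸ hq2)
      · exact hac v' (Relation.TransGen.head hyE
          (Relation.TransGen.single (h2 ▸ hq2)))
    · exact hl.2 (cyc v') (cyc v) Hc' Hc heq v' Hv' hmem
  -- the tree vertices harvested from each cycle
  set S : ℕ → Finset ℕ := fun v => (cyc v).toFinset.erase v with hSdef
  have hScard : ∀ v ∈ R, 2 ≤ (S v).card := by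
    intro v hv
    obtain ⟨Hc, Hlen, Hv, H3, H4, H5, H6⟩ := hcyc v hv
    have hnd : (cyc v).Nodup := Hc.2.1
    have h1 : (cyc v).toFinset.card = (cyc v).length := List.toFinset_card_of_nodup hnd
    have h2 : v ∈ (cyc v).toFinset := List.mem_toFinset.mpr Hv
    have h3 := Finset.card_erase_of_mem h2
    rw [hSdef]
    simp only []
    omega
  have hST : ∀ v ∈ R, S v ⊆ T := by
    intro v hv z hz
    obtain ⟨Hc, Hlen, Hv, H3, H4, H5, H6⟩ := hcyc v hv
    rw [hSdef] at hz
    simp only [Finset.mem_erase, List.mem_toFinset] at hz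
    obtain ⟨hzv, hzc⟩ := hz
    obtain ⟨hzV, hzroot, y, hyE, _⟩ := H3 z hzc hzv
    have hzout : N.outDeg z ≠ 0 := by
      have : (z, y) ∈ N.edges.filter (fun e => e.1 = z) :=
        Multiset.mem_filter.mpr ⟨hyE, rfl⟩
      have := Multiset.card_pos_iff_exists_mem.mpr ⟨_, this⟩
      rw [RootedNet.outDeg]
      omega
    rcases hdich z hzV hzroot hzout with htree | hret
    · exact (hTmem z).mpr ⟨hzV, htree⟩
    · exact absurd hzc (claimB v hv z ((hRmem z).mpr ⟨hzV, hret.1⟩) hzv)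
  have hSdisj : ∀ v ∈ R, ∀ v' ∈ R, v ≠ v' → Disjoint (S v) (S v') := by
    intro v hv v' hv' hne
    rw [Finset.disjoint_left]
    intro z hzS hzS'
    obtain ⟨Hc, Hlen, Hv, H3, H4, H5, H6⟩ := hcyc v hv
    obtain ⟨Hc', Hlen', Hv', H3', H4', H5', H6'⟩ := hcyc v' hv'
    rw [hSdef] at hzS hzS'
    simp only [Finset.mem_erase, List.mem_toFinset] at hzS hzS'
    obtain ⟨hzv, hzc⟩ := hzS
    obtain ⟨hzv', hzc'⟩ := hzS'
    by_cases heq : cycleEdges (cyc v) = cycleEdges (cyc v')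
    · obtain ⟨e, he, hve⟩ := H5'
      rw [← heq] at he
      exact claimB v hv v' hv' (Ne.symm hne) (H6 e he v' hve)
    · exact (hl.2 (cyc v) (cyc v') Hc Hc' heq z hzc) hzc'
  have h2r : 2 * R.card ≤ T.card := by
    calc 2 * R.card = ∑ _v ∈ R, 2 := by
          rw [Finset.sum_const, smul_eq_mul, mul_comm]
      _ ≤ ∑ v ∈ R, (S v).card := Finset.sum_le_sum hScard
      _ = (R.biUnion S).card := (Finset.card_biUnion hSdisj).symm
      _ ≤ T.card := by
          refine Finset.card_le_card ?_
          intro z hz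
          obtain ⟨v, hv, hzS⟩ := Finset.mem_biUnion.mp hz
          exact hST v hv hzS
  -- counting the edges by heads and by tails
  have hsumIn : Multiset.card N.edges = ∑ v ∈ N.verts, N.inDeg v :=
    card_eq_sum_filter N.verts (fun e => e.2) N.edges (fun e he => (hEV e he).2)
  have hsumOut : Multiset.card N.edges = ∑ v ∈ N.verts, N.outDeg v :=
    card_eq_sum_filter N.verts (fun e => e.1) N.edges (fun e he => (hEV e he).1)
  have hrX : N.root ∉ X := fun h => by
    have := (hleaf _ hrV).mp h
    omega
  have hrT : N.root ∉ T := fun h => by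
    have := ((hTmem _).mp h).2.1
    omega
  have hrR : N.root ∉ R := fun h => by
    have := ((hRmem _).mp h).2
    omega
  have hXin : ∀ v ∈ X, N.inDeg v = 1 := fun v hv =>
    hleafin v (hXV hv) ((hleaf v (hXV hv)).mp hv)
  have hXout : ∀ v ∈ X, N.outDeg v = 0 := fun v hv => (hleaf v (hXV hv)).mp hv
  have hRout : ∀ v ∈ R, N.outDeg v = 1 := by
    intro v hv
    obtain ⟨hv1, hv2⟩ := (hRmem v).mp hv
    have hvroot : v ≠ N.root := fun h => by rw [h, hr0] at hv2; omega
    have hvout : N.outDeg v ≠ 0 := fun h => by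
      have := hleafin v hv1 h
      omega
    rcases hdich v hv1 hvroot hvout with htree | hret
    · omega
    · exact hret.2
  have hdisjXT : Disjoint X T := by
    rw [Finset.disjoint_left]
    intro v hv hv'
    have := hXout v hv
    have := ((hTmem v).mp hv').2.2
    omega
  have hdisjXR : Disjoint X R := by
    rw [Finset.disjoint_left]
    intro v hv hv'
    have := hXin v hv
    have := ((hRmem v).mp hv').2
    omega
  have hdisjTR : Disjoint T R := by
    rw [Finset.disjoint_left]
    intro v hv hv'
    have := ((hTmem v).mp hv).2.1
    have := ((hRmem v).mp hv').2
    omega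
  have hVeq : N.verts = insert N.root (X ∪ T ∪ R) := by
    ext z
    constructor
    · intro hz
      by_cases hzr : z = N.root
      · rw [hzr]; exact Finset.mem_insert_self _ _
      · refine Finset.mem_insert_of_mem ?_
        by_cases hzX : z ∈ X
        · exact Finset.mem_union_left _ (Finset.mem_union_left _ hzX)
        · have hzout : N.outDeg z ≠ 0 := fun h => hzX ((hleaf z hz).mpr h)
          rcases hdich z hz hzr hzout with htree | hret
          · exact Finset.mem_union_left _
              (Finset.mem_union_right _ ((hTmem z).mpr ⟨hz, htree⟩))
          · exact Finset.mem_union_right _ ((hRmem z).mpr ⟨hz, hret.1⟩)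
    · intro hz
      rcases Finset.mem_insert.mp hz with rfl | hz'
      · exact hrV
      · rcases Finset.mem_union.mp hz' with h | h
        · rcases Finset.mem_union.mp h with h' | h'
          · exact hXV h'
          · exact ((hTmem z).mp h').1
        · exact ((hRmem z).mp h).1
  have hrnotin : N.root ∉ X ∪ T ∪ R := by
    simp only [Finset.mem_union, not_or]
    exact ⟨⟨hrX, hrT⟩, hrR⟩
  have hdisjX_TR : Disjoint X (T ∪ R) := Finset.disjoint_union_right.mpr ⟨hdisjXT, hdisjXR⟩
  have hsum_split : ∀ f : ℕ → ℕ, ∑ v ∈ N.verts, f v =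
      f N.root + (∑ v ∈ X, f v + (∑ v ∈ T, f v + ∑ v ∈ R, f v)) := by
    intro f
    rw [hVeq, Finset.sum_insert hrnotin, Finset.union_assoc,
      Finset.sum_union (Finset.disjoint_union_right.mpr ⟨hdisjXT, hdisjXR⟩),
      Finset.sum_union hdisjTR]
  have hInEq : ∑ v ∈ N.verts, N.inDeg v = X.card + T.card + 2 * R.card := by
    rw [hsum_split]
    rw [hr0]
    have h1 : ∑ v ∈ X, N.inDeg v = X.card := by
      rw [Finset.sum_congr rfl hXin, Finset.sum_const, smul_eq_mul, mul_one]
    have h2 : ∑ v ∈ T, N.inDeg v = T.card := by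
      rw [Finset.sum_congr rfl (fun v hv => ((hTmem v).mp hv).2.1),
        Finset.sum_const, smul_eq_mul, mul_one]
    have h3 : ∑ v ∈ R, N.inDeg v = 2 * R.card := by
      rw [Finset.sum_congr rfl (fun v hv => ((hRmem v).mp hv).2),
        Finset.sum_const, smul_eq_mul, mul_comm]
    omega
  have hOutEq : ∑ v ∈ N.verts, N.outDeg v = 1 + 2 * T.card + R.card := by
    rw [hsum_split]
    rw [hr1]
    have h1 : ∑ v ∈ X, N.outDeg v = 0 := by
      rw [Finset.sum_congr rfl hXout, Finset.sum_const, smul_eq_mul, mul_zero]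
    have h2 : ∑ v ∈ T, N.outDeg v = 2 * T.card := by
      rw [Finset.sum_congr rfl (fun v hv => ((hTmem v).mp hv).2.2),
        Finset.sum_const, smul_eq_mul, mul_comm]
    have h3 : ∑ v ∈ R, N.outDeg v = R.card := by
      rw [Finset.sum_congr rfl hRout, Finset.sum_const, smul_eq_mul, mul_one]
    omega
  have hnum : N.numRet = R.card := rfl
  omega

end Phylo
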